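/- arXiv:2305.10877 — 4 statements merged into one kernel-verified Lean document; each statement's English description precedes it below -/
import Mathlib

section
/- Let H be a symmetric N×N real matrix, let p > 1, and let η ∈ ℝ^N with |η| = 1. Then trace(H²) + 2(p-2)·|Hη|² + (p-2)²·(⟨Hη, η⟩)² ≥ C·trace(H²) for a positive constant C = C(N, p) independent of H and η, where C = min{1, (p-1)²} works. -/
open Real

theorem stmt_9 {N : ℕ} (H : Matrix (Fin N) (Fin N) ℝ) (hH : H.IsSymm)
    (p : ℝ) (hp : 1 < p) (η : Fin N → ℝ) (hη : ∑ i, η i ^ 2 = 1) :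
    Matrix.trace (H * H) + 2 * (p - 2) * (∑ i, (H.mulVec η i) ^ 2) +
      (p - 2) ^ 2 * (∑ i, H.mulVec η i * η i) ^ 2 ≥
    min 1 ((p - 1) ^ 2) * Matrix.trace (H * H) := by
  have hsym : ∀ i j, H j i = H i j := fun i j => hH.apply i j
  set v : Fin N → ℝ := H.mulVec η with hv
  have hvdef : ∀ i, v i = ∑ j, H i j * η j := by
    intro i
    simp [hv, Matrix.mulVec, dotProduct]
  set c : ℝ := ∑ i, v i * η i with hc
  set a : ℝ := ∑ i, v i ^ 2 with ha
  set t : ℝ := ∑ i, ∑ j, H i j ^ 2 with ht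
  have htr : Matrix.trace (H * H) = t := by
    rw [ht, Matrix.trace]
    apply Finset.sum_congr rfl
    intro i _
    rw [Matrix.diag_apply, Matrix.mul_apply]
    exact Finset.sum_congr rfl fun j _ => by rw [hsym i j]; ring
  have f4 : ∑ i, η i * (∑ j, H i j * v j) = a := by
    have swap : ∑ i, ∑ j, η i * (H i j * v j) = ∑ j, ∑ i, η i * (H i j * v j) :=
      Finset.sum_comm
    calc ∑ i, η i * (∑ j, H i j * v j) = ∑ i, ∑ j, η i * (H i j * v j) := by
          refine Finset.sum_congr rfl fun i _ => ?_
          rw [Finset.mul_sum]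
      _ = ∑ j, ∑ i, η i * (H i j * v j) := swap
      _ = ∑ j, v j * ∑ i, H j i * η i := by
          refine Finset.sum_congr rfl fun j _ => ?_
          rw [Finset.mul_sum]
          exact Finset.sum_congr rfl fun i _ => by rw [hsym j i]; ring
      _ = ∑ j, v j ^ 2 := by
          refine Finset.sum_congr rfl fun j _ => ?_
          rw [← hvdef j]; ring
  set M : Fin N → Fin N → ℝ := fun i j => H i j - v i * η j - η i * v j + c * η i * η j with hM
  have inner : ∀ i, ∑ j, M i j ^ 2 =
      (∑ j, H i j ^ 2) - v i ^ 2 + a * η i ^ 2 - c ^ 2 * η i ^ 2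
        - 2 * (η i * (∑ j, H i j * v j)) + (2 * c) * (v i * η i) := by
    intro i
    have e : ∀ j, M i j ^ 2 = H i j ^ 2 - (2 * v i) * (H i j * η j) - (2 * η i) * (H i j * v j)
        + (2 * c * η i) * (H i j * η j) + (v i ^ 2) * η j ^ 2 + (2 * v i * η i) * (v j * η j)
        - (2 * c * v i * η i) * η j ^ 2 + (η i ^ 2) * v j ^ 2 - (2 * c * η i ^ 2) * (v j * η j)
        + (c ^ 2 * η i ^ 2) * η j ^ 2 := by
      intro j; simp only [hM]; ring
    rw [Finset.sum_congr rfl fun j _ => e j]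
    simp only [Finset.sum_add_distrib, Finset.sum_sub_distrib, ← Finset.mul_sum]
    rw [← hvdef i, hη, ← ha, ← hc]
    ring
  have key : ∑ i, ∑ j, M i j ^ 2 = t - 2 * a + c ^ 2 := by
    rw [Finset.sum_congr rfl fun i _ => inner i]
    simp only [Finset.sum_add_distrib, Finset.sum_sub_distrib, ← Finset.mul_sum]
    rw [← ht, hη, ← ha, f4, ← hc]
    ring
  have key1 : 0 ≤ t - 2 * a + c ^ 2 := by
    rw [← key]
    exact Finset.sum_nonneg fun i _ => Finset.sum_nonneg fun j _ => sq_nonneg _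
  have key2 : a ≤ t := by
    rw [ha, ht]
    refine Finset.sum_le_sum fun i _ => ?_
    calc v i ^ 2 = (∑ j, H i j * η j) ^ 2 := by rw [hvdef i]
      _ ≤ (∑ j, H i j ^ 2) * (∑ j, η j ^ 2) :=
          Finset.sum_mul_sq_le_sq_mul_sq _ _ _
      _ = ∑ j, H i j ^ 2 := by rw [hη, mul_one]
  have key3 : c ^ 2 ≤ a := by
    calc c ^ 2 = (∑ i, v i * η i) ^ 2 := by rw [hc]
      _ ≤ (∑ i, v i ^ 2) * (∑ i, η i ^ 2) := Finset.sum_mul_sq_le_sq_mul_sq _ _ _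
      _ = a := by rw [hη, mul_one, ← ha]
  have ha0 : 0 ≤ a := Finset.sum_nonneg fun i _ => sq_nonneg _
  rw [htr]
  rcases le_or_gt 2 p with h2 | h2
  · have hmin : min 1 ((p - 1) ^ 2) = 1 := by
      apply min_eq_left
      nlinarith
    rw [hmin]
    nlinarith [sq_nonneg ((p - 2) * c), mul_nonneg (by linarith : (0:ℝ) ≤ p - 2) ha0]
  · have hmin : min 1 ((p - 1) ^ 2) = (p - 1) ^ 2 := by
      apply min_eq_right
      nlinarith
    rw [hmin]
    have hs0 : 0 < 2 - p := by linarith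
    nlinarith [mul_nonneg hs0.le key1,
      mul_nonneg (mul_nonneg hs0.le (by linarith : (0:ℝ) ≤ p - 1))
        (by linarith [key2, key3] : (0:ℝ) ≤ t - c ^ 2)]
end

section
/- Let ε ∈ (0,1), μ ∈ (0, p⁻ − 1), and p, q ∈ [p⁻, p⁺] with, say, p ≥ q. Then for all ξ ∈ ℝ^N: |F_ε(p, ξ) − F_ε(q, ξ)| ≤ C·|p − q|·(1 + |ξ|^(p−1))·(1 + log(1 + |ξ|²)) with a constant C depending only on μ, p⁻, p⁺ and not on ξ or ε, where F_ε(p, ξ) = (ε² + |ξ|²)^((p−2)/2)·ξ. -/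
open Real

lemma aux_abs_exp_sub_exp (x y : ℝ) :
    |Real.exp x - Real.exp y| ≤ |x - y| * max (Real.exp x) (Real.exp y) := by
  wlog h : y ≤ x generalizing x y
  · rw [abs_sub_comm, abs_sub_comm x y, max_comm]
    exact this y x (le_of_not_ge h)
  have hxy : Real.exp y ≤ Real.exp x := Real.exp_le_exp.mpr h
  rw [abs_of_nonneg (by linarith), abs_of_nonneg (by linarith), max_eq_left hxy]
  have h1 : (y - x) + 1 ≤ Real.exp (y - x) := Real.add_one_le_exp _
  have h2 : Real.exp y = Real.exp x * Real.exp (y - x) := by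
    rw [← Real.exp_add]; ring_nf
  nlinarith [Real.exp_pos x]

lemma aux_one_add_rpow (s r R : ℝ) (hs : 0 ≤ s) (hr : 0 ≤ r) (hrR : r ≤ R) :
    (1 + s) ^ r ≤ 2 ^ R * (1 + s ^ r) := by
  have h2R : (2:ℝ) ^ r ≤ 2 ^ R := Real.rpow_le_rpow_of_exponent_le one_le_two hrR
  have hsr : (0:ℝ) ≤ s ^ r := Real.rpow_nonneg hs r
  have h2Rpos : (0:ℝ) < 2 ^ R := Real.rpow_pos_of_pos two_pos R
  rcases le_total s 1 with h | h
  · have h1 : (1 + s) ^ r ≤ 2 ^ r := Real.rpow_le_rpow (by positivity) (by linarith) hr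
    nlinarith
  · have h1 : (1 + s) ^ r ≤ (2 * s) ^ r := Real.rpow_le_rpow (by positivity) (by linarith) hr
    rw [Real.mul_rpow (by norm_num) hs] at h1
    nlinarith

set_option maxHeartbeats 1000000 in
theorem stmt_12 {N : ℕ} (pm pp μ : ℝ) (hpm : 1 < pm) (hpp : pm ≤ pp)
    (hμ0 : 0 < μ) (hμ : μ < pm - 1) :
    ∃ C : ℝ, 0 < C ∧ ∀ (ε p q : ℝ), 0 < ε → ε < 1 →
      p ∈ Set.Icc pm pp → q ∈ Set.Icc pm pp → q ≤ p →
      ∀ ξ : EuclideanSpace ℝ (Fin N),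
        ‖((ε ^ 2 + ‖ξ‖ ^ 2) ^ ((p - 2) / 2)) • ξ -
          ((ε ^ 2 + ‖ξ‖ ^ 2) ^ ((q - 2) / 2)) • ξ‖ ≤
        C * |p - q| * (1 + ‖ξ‖ ^ (p - 1)) * (1 + Real.log (1 + ‖ξ‖ ^ 2)) := by
  refine ⟨(2:ℝ) ^ pp + 1 / μ, by positivity, ?_⟩
  intro ε p q hε0 hε1 hp hq hqp ξ
  obtain ⟨hp1, hp2⟩ := hp
  obtain ⟨hq1, hq2⟩ := hq
  set s : ℝ := ‖ξ‖ with hsdef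
  have hs0 : 0 ≤ s := norm_nonneg ξ
  set t : ℝ := ε ^ 2 + s ^ 2 with htdef
  have ht0 : 0 < t := by positivity
  have hst : s ^ 2 ≤ t := by nlinarith
  have hslet : s ≤ t ^ ((1:ℝ)/2) := by
    rw [← Real.sqrt_eq_rpow]
    exact (Real.le_sqrt hs0 ht0.le).mpr hst
  have habs : |p - q| = p - q := abs_of_nonneg (by linarith)
  have hA : (0:ℝ) ≤ (p - q)/2 := by linarith
  have hA' : (0:ℝ) ≤ p - q := by linarith
  -- rewrite LHS
  rw [← sub_smul, norm_smul, Real.norm_eq_abs]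
  -- mean value bound
  have hba : (q - 2)/2 ≤ (p - 2)/2 := by linarith
  have key : |t ^ ((p-2)/2) - t ^ ((q-2)/2)| ≤
      ((p - q)/2) * |Real.log t| * max (t ^ ((p-2)/2)) (t ^ ((q-2)/2)) := by
    rw [Real.rpow_def_of_pos ht0, Real.rpow_def_of_pos ht0]
    refine (aux_abs_exp_sub_exp _ _).trans_eq ?_
    rw [show Real.log t * ((p-2)/2) - Real.log t * ((q-2)/2)
        = Real.log t * ((p - q)/2) by ring, abs_mul,
      abs_of_nonneg hA]
    ring
  have hsq : t ^ ((p-2)/2) * s ≤ t ^ ((p-1)/2) := by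
    calc t ^ ((p-2)/2) * s ≤ t ^ ((p-2)/2) * t ^ ((1:ℝ)/2) :=
          mul_le_mul_of_nonneg_left hslet (Real.rpow_nonneg ht0.le _)
      _ = t ^ ((p-1)/2) := by
          rw [← Real.rpow_add ht0]; ring_nf
  have hsqq : t ^ ((q-2)/2) * s ≤ t ^ ((q-1)/2) := by
    calc t ^ ((q-2)/2) * s ≤ t ^ ((q-2)/2) * t ^ ((1:ℝ)/2) :=
          mul_le_mul_of_nonneg_left hslet (Real.rpow_nonneg ht0.le _)
      _ = t ^ ((q-1)/2) := by
          rw [← Real.rpow_add ht0]; ring_nf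
  have hLg0 : 0 ≤ Real.log (1 + s ^ 2) := Real.log_nonneg (by nlinarith)
  have hP1 : (0:ℝ) ≤ s ^ (p - 1) := Real.rpow_nonneg hs0 _
  have h2pp : (0:ℝ) < 2 ^ pp := Real.rpow_pos_of_pos two_pos pp
  set P : ℝ := 1 + s ^ (p - 1) with hPdef
  set Lg : ℝ := Real.log (1 + s ^ 2) with hLgdef
  have hPpos : (0:ℝ) < P := by rw [hPdef]; linarith
  have hL1 : (1:ℝ) ≤ 1 + Lg := by linarith
  have hmainmul : |t ^ ((p-2)/2) - t ^ ((q-2)/2)| * s ≤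
      ((p - q)/2) * |Real.log t| * max (t ^ ((p-2)/2)) (t ^ ((q-2)/2)) * s :=
    mul_le_mul_of_nonneg_right key hs0
  rw [habs]
  rcases le_or_gt 1 t with h1 | h1
  -- Case t ≥ 1
  · have hmax : max (t ^ ((p-2)/2)) (t ^ ((q-2)/2)) = t ^ ((p-2)/2) :=
      max_eq_left (Real.rpow_le_rpow_of_exponent_le h1 hba)
    have hlogt0 : 0 ≤ Real.log t := Real.log_nonneg h1
    have hlogle : Real.log t ≤ Lg := by
      rw [hLgdef]
      apply Real.log_le_log ht0
      nlinarith
    have hpow : t ^ ((p-1)/2) ≤ 2 ^ pp * P := by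
      have ht2 : t ≤ (1 + s) ^ 2 := by nlinarith
      have h1' : t ^ ((p-1)/2) ≤ ((1 + s) ^ 2) ^ ((p-1)/2) :=
        Real.rpow_le_rpow ht0.le ht2 (by linarith)
      have h2' : ((1 + s) ^ 2 : ℝ) ^ ((p-1)/2) = (1 + s) ^ (p-1) := by
        rw [← Real.rpow_natCast (1 + s) 2, ← Real.rpow_mul (by positivity)]
        congr 1
        push_cast
        ring
      rw [h2'] at h1'
      exact h1'.trans (aux_one_add_rpow s (p-1) pp hs0 (by linarith) (by linarith))
    rw [hmax, abs_of_nonneg hlogt0] at hmainmul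
    have htp0 : (0:ℝ) ≤ t ^ ((p-2)/2) := Real.rpow_nonneg ht0.le _
    have hc1 : ((p - q)/2) * Real.log t * t ^ ((p-2)/2) * s ≤
        ((p - q)/2) * Lg * (2 ^ pp * P) := by
      calc ((p - q)/2) * Real.log t * t ^ ((p-2)/2) * s
          = ((p - q)/2 * Real.log t) * (t ^ ((p-2)/2) * s) := by ring
        _ ≤ ((p - q)/2 * Lg) * (t ^ ((p-2)/2) * s) :=
            mul_le_mul_of_nonneg_right (mul_le_mul_of_nonneg_left hlogle hA)
              (mul_nonneg htp0 hs0)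
        _ ≤ ((p - q)/2 * Lg) * (2 ^ pp * P) :=
            mul_le_mul_of_nonneg_left (hsq.trans hpow) (mul_nonneg hA hLg0)
    refine (hmainmul.trans hc1).trans ?_
    have e : ((2:ℝ) ^ pp + 1/μ) * (p - q) * P * (1 + Lg)
        = (p - q) * (1 + Lg) * (2 ^ pp * P) + (1/μ) * ((p - q) * P * (1 + Lg)) := by
      ring
    have nn : (0:ℝ) ≤ (1/μ) * ((p - q) * P * (1 + Lg)) := by
      apply mul_nonneg (by positivity)
      exact mul_nonneg (mul_nonneg hA' hPpos.le) (by linarith)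
    have step : ((p - q)/2) * Lg * (2 ^ pp * P) ≤ (p - q) * (1 + Lg) * (2 ^ pp * P) := by
      apply mul_le_mul_of_nonneg_right _ (mul_nonneg h2pp.le hPpos.le)
      nlinarith
    linarith
  -- Case t < 1
  · have hmax : max (t ^ ((p-2)/2)) (t ^ ((q-2)/2)) = t ^ ((q-2)/2) :=
      max_eq_right (Real.rpow_le_rpow_of_exponent_ge ht0 h1.le hba)
    have hlogneg : Real.log t < 0 := Real.log_neg ht0 h1
    have hloglt : -Real.log t ≤ (2/μ) * t ^ (-(μ/2)) := by
      have h3 : Real.log (t ^ (-(μ/2))) ≤ t ^ (-(μ/2)) - 1 :=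
        Real.log_le_sub_one_of_pos (Real.rpow_pos_of_pos ht0 _)
      rw [Real.log_rpow ht0] at h3
      have h4 : -(μ/2) * Real.log t ≤ t ^ (-(μ/2)) := by
        have : (0:ℝ) < t ^ (-(μ/2)) := Real.rpow_pos_of_pos ht0 _
        linarith
      have h5 : -Real.log t = (2/μ) * (-(μ/2) * Real.log t) := by
        field_simp
      rw [h5]
      exact mul_le_mul_of_nonneg_left h4 (by positivity)
    rw [hmax, abs_of_neg hlogneg] at hmainmul
    have htq0 : (0:ℝ) ≤ t ^ ((q-2)/2) := Real.rpow_nonneg ht0.le _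
    have hcomb : ((p - q)/2) * (-Real.log t) * t ^ ((q-2)/2) * s ≤ (p - q) / μ := by
      have step1 : ((p - q)/2) * (-Real.log t) * t ^ ((q-2)/2) * s ≤
          ((p - q)/2) * ((2/μ) * t ^ (-(μ/2))) * (t ^ ((q-1)/2)) := by
        calc ((p - q)/2) * (-Real.log t) * t ^ ((q-2)/2) * s
            = ((p - q)/2 * (-Real.log t)) * (t ^ ((q-2)/2) * s) := by ring
          _ ≤ ((p - q)/2 * ((2/μ) * t ^ (-(μ/2)))) * (t ^ ((q-2)/2) * s) :=
              mul_le_mul_of_nonneg_right (mul_le_mul_of_nonneg_left hloglt hA)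
                (mul_nonneg htq0 hs0)
          _ ≤ ((p - q)/2 * ((2/μ) * t ^ (-(μ/2)))) * (t ^ ((q-1)/2)) := by
              apply mul_le_mul_of_nonneg_left hsqq
              apply mul_nonneg hA
              positivity
      have step2 : ((p - q)/2) * ((2/μ) * t ^ (-(μ/2))) * (t ^ ((q-1)/2)) =
          ((p - q)/μ) * t ^ ((q-1-μ)/2) := by
        rw [show ((p - q)/2) * ((2/μ) * t ^ (-(μ/2))) * (t ^ ((q-1)/2))
            = ((p - q)/μ) * (t ^ (-(μ/2)) * t ^ ((q-1)/2)) by field_simp,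
          ← Real.rpow_add ht0]
        ring_nf
      have step3 : t ^ ((q-1-μ)/2) ≤ 1 :=
        Real.rpow_le_one ht0.le h1.le (by linarith)
      rw [step2] at step1
      refine step1.trans ?_
      have hpqμ : (0:ℝ) ≤ (p - q)/μ := div_nonneg hA' hμ0.le
      nlinarith [Real.rpow_nonneg ht0.le ((q-1-μ)/2)]
    refine (hmainmul.trans hcomb).trans ?_
    have hPL : (1:ℝ) ≤ P * (1 + Lg) := one_le_mul_of_one_le_of_one_le (by linarith) hL1
    have e : ((2:ℝ) ^ pp + 1/μ) * (p - q) * P * (1 + Lg)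
        = (2 ^ pp) * ((p - q) * (P * (1 + Lg))) + (1/μ) * (p - q) * (P * (1 + Lg)) := by
      ring
    have nn : (0:ℝ) ≤ (2 ^ pp) * ((p - q) * (P * (1 + Lg))) := by
      apply mul_nonneg h2pp.le
      exact mul_nonneg hA' (by linarith)
    have step : (p - q)/μ ≤ (1/μ) * (p - q) * (P * (1 + Lg)) := by
      have : (p - q)/μ = (1/μ) * (p - q) * 1 := by field_simp
      rw [this]
      exact mul_le_mul_of_nonneg_left hPL (mul_nonneg (by positivity) hA')
    calc (p - q)/μ ≤ (1/μ) * (p - q) * (P * (1 + Lg)) := step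
      _ ≤ (2 ^ pp) * ((p - q) * (P * (1 + Lg))) + (1/μ) * (p - q) * (P * (1 + Lg)) :=
          le_add_of_nonneg_left nn
      _ = ((2:ℝ) ^ pp + 1/μ) * (p - q) * P * (1 + Lg) := by ring
end

section
/- Let a, b ∈ ℝ^N, p ≥ 2, and ε > 0. Then ((ε²+|a|²)^((p−2)/2)·a − (ε²+|b|²)^((p−2)/2)·b) · (a − b) ≥ C·|a − b|^p for a constant C > 0 depending only on p. -/
open Real
open scoped RealInnerProductSpace

theorem stmt_14 {N : ℕ} (p : ℝ) (hp : 2 ≤ p) :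
    ∃ C : ℝ, 0 < C ∧ ∀ (ε : ℝ), 0 < ε →
      ∀ a b : EuclideanSpace ℝ (Fin N),
        ⟪((ε ^ 2 + ‖a‖ ^ 2) ^ ((p - 2) / 2)) • a -
          ((ε ^ 2 + ‖b‖ ^ 2) ^ ((p - 2) / 2)) • b, a - b⟫ ≥
        C * ‖a - b‖ ^ p := by
  have hp2 : (0:ℝ) ≤ p - 2 := by linarith
  refine ⟨(2:ℝ) ^ (1 - p), Real.rpow_pos_of_pos two_pos _, ?_⟩
  intro ε hε a b
  set ga := (ε ^ 2 + ‖a‖ ^ 2) ^ ((p - 2) / 2) with hga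
  set gb := (ε ^ 2 + ‖b‖ ^ 2) ^ ((p - 2) / 2) with hgb
  by_cases hab : a = b
  · subst hab
    simp [Real.zero_rpow (by positivity : p ≠ 0)]
  have hnab : 0 < ‖a - b‖ := by
    rw [norm_pos_iff]; exact sub_ne_zero.mpr hab
  -- expand the inner product
  have expand : ⟪ga • a - gb • b, a - b⟫ =
      ga * ‖a‖ ^ 2 + gb * ‖b‖ ^ 2 - (ga + gb) * ⟪a, b⟫ := by
    simp only [inner_sub_left, inner_sub_right, real_inner_smul_left,
      real_inner_self_eq_norm_sq, real_inner_comm b a]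
    ring
  have hsq : ‖a - b‖ ^ 2 = ‖a‖ ^ 2 - 2 * ⟪a, b⟫ + ‖b‖ ^ 2 :=
    norm_sub_sq_real a b
  -- Step 1: inner product ≥ ((ga+gb)/2)‖a-b‖²
  have step1 : ⟪ga • a - gb • b, a - b⟫ ≥ (ga + gb) / 2 * ‖a - b‖ ^ 2 := by
    have key : (0:ℝ) ≤ (ga - gb) * (‖a‖ ^ 2 - ‖b‖ ^ 2) := by
      rcases le_total ‖a‖ ‖b‖ with h | h
      · have h2 : ‖a‖ ^ 2 ≤ ‖b‖ ^ 2 := by nlinarith [norm_nonneg a, norm_nonneg b]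
        have hg : ga ≤ gb := by
          rw [hga, hgb]
          exact Real.rpow_le_rpow (by positivity) (by linarith) (by positivity)
        nlinarith
      · have h2 : ‖b‖ ^ 2 ≤ ‖a‖ ^ 2 := by nlinarith [norm_nonneg a, norm_nonneg b]
        have hg : gb ≤ ga := by
          rw [hga, hgb]
          exact Real.rpow_le_rpow (by positivity) (by linarith) (by positivity)
        nlinarith
    rw [expand, hsq]; nlinarith
  -- Step 2: ‖x‖^(p-2) ≤ g_x
  have pow_le : ∀ x : EuclideanSpace ℝ (Fin N),
      ‖x‖ ^ (p - 2) ≤ (ε ^ 2 + ‖x‖ ^ 2) ^ ((p - 2) / 2) := by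
    intro x
    have h1 : ‖x‖ ^ (p - 2) = (‖x‖ ^ 2) ^ ((p - 2) / 2) := by
      rw [← Real.rpow_natCast ‖x‖ 2, ← Real.rpow_mul (norm_nonneg x)]
      norm_num
      rw [show 2 * ((p - 2) / 2) = p - 2 by ring]
    rw [h1]
    exact Real.rpow_le_rpow (by positivity) (by nlinarith) (by positivity)
  -- Step 3: ‖a-b‖^(p-2) ≤ 2^(p-2) (‖a‖^(p-2) + ‖b‖^(p-2))
  have step3 : ‖a - b‖ ^ (p - 2) ≤ 2 ^ (p - 2) * (‖a‖ ^ (p - 2) + ‖b‖ ^ (p - 2)) := by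
    set M := max ‖a‖ ‖b‖ with hM
    have hM0 : 0 ≤ M := le_trans (norm_nonneg a) (le_max_left _ _)
    have h1 : ‖a - b‖ ≤ 2 * M := by
      have := norm_sub_le a b
      have h2 := le_max_left ‖a‖ ‖b‖
      have h3 := le_max_right ‖a‖ ‖b‖
      linarith
    have hMle : M ^ (p - 2) ≤ ‖a‖ ^ (p - 2) + ‖b‖ ^ (p - 2) := by
      rcases max_cases ‖a‖ ‖b‖ with ⟨heq, _⟩ | ⟨heq, _⟩ <;> rw [hM, heq]
      · have : (0:ℝ) ≤ ‖b‖ ^ (p - 2) := Real.rpow_nonneg (norm_nonneg b) _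
        linarith
      · have : (0:ℝ) ≤ ‖a‖ ^ (p - 2) := Real.rpow_nonneg (norm_nonneg a) _
        linarith
    calc ‖a - b‖ ^ (p - 2) ≤ (2 * M) ^ (p - 2) :=
          Real.rpow_le_rpow (norm_nonneg _) h1 hp2
      _ = 2 ^ (p - 2) * M ^ (p - 2) := Real.mul_rpow (by norm_num) hM0
      _ ≤ 2 ^ (p - 2) * (‖a‖ ^ (p - 2) + ‖b‖ ^ (p - 2)) := by
          exact mul_le_mul_of_nonneg_left hMle (Real.rpow_nonneg (by norm_num) _)
  -- combine
  have hsum : ga + gb ≥ ‖a‖ ^ (p - 2) + ‖b‖ ^ (p - 2) :=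
    add_le_add (pow_le a) (pow_le b)
  have hfrac : (2:ℝ) ^ (p - 2) * ((2:ℝ) ^ (1 - p)) = 1 / 2 := by
    rw [← Real.rpow_add two_pos, show p - 2 + (1 - p) = -1 by ring, Real.rpow_neg_one]
    norm_num
  have h2pos : (0:ℝ) < 2 ^ (p - 2) := Real.rpow_pos_of_pos two_pos _
  have hCpos : (0:ℝ) < 2 ^ (1 - p) := Real.rpow_pos_of_pos two_pos _
  have hgsum : ga + gb ≥ 2 * (2:ℝ) ^ (1 - p) * ‖a - b‖ ^ (p - 2) := by
    have h4 : ‖a - b‖ ^ (p - 2) * ((2:ℝ) ^ (1 - p)) ≤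
        (1 / 2) * (‖a‖ ^ (p - 2) + ‖b‖ ^ (p - 2)) := by
      calc ‖a - b‖ ^ (p - 2) * ((2:ℝ) ^ (1 - p))
          ≤ (2 ^ (p - 2) * (‖a‖ ^ (p - 2) + ‖b‖ ^ (p - 2))) * ((2:ℝ) ^ (1 - p)) :=
            mul_le_mul_of_nonneg_right step3 hCpos.le
        _ = (2 ^ (p - 2) * ((2:ℝ) ^ (1 - p))) * (‖a‖ ^ (p - 2) + ‖b‖ ^ (p - 2)) := by ring
        _ = (1 / 2) * (‖a‖ ^ (p - 2) + ‖b‖ ^ (p - 2)) := by rw [hfrac]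
    linarith
  have hpowsplit : ‖a - b‖ ^ (p - 2) * ‖a - b‖ ^ 2 = ‖a - b‖ ^ p := by
    rw [← Real.rpow_natCast (‖a - b‖) 2, ← Real.rpow_add hnab]
    norm_num
  have hfinal : (ga + gb) / 2 * ‖a - b‖ ^ 2 ≥ (2:ℝ) ^ (1 - p) * ‖a - b‖ ^ p := by
    rw [← hpowsplit]
    have hsq0 : (0:ℝ) ≤ ‖a - b‖ ^ 2 := sq_nonneg _
    have := mul_le_mul_of_nonneg_right hgsum hsq0
    calc (2:ℝ) ^ (1 - p) * (‖a - b‖ ^ (p - 2) * ‖a - b‖ ^ 2)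
        = (2 * (2:ℝ) ^ (1 - p) * ‖a - b‖ ^ (p - 2)) * ‖a - b‖ ^ 2 / 2 := by ring
      _ ≤ (ga + gb) * ‖a - b‖ ^ 2 / 2 := by linarith
      _ = (ga + gb) / 2 * ‖a - b‖ ^ 2 := by ring
  exact le_trans hfinal step1
end

section
/- Let a, b ∈ ℝ^N, 1 < p < 2, and ε ∈ (0,1). Then ((ε²+|a|²)^((p−2)/2)·a − (ε²+|b|²)^((p−2)/2)·b) · (a − b) ≥ C·(1 + |a|² + |b|²)^((p−2)/2)·|a − b|² for a constant C > 0 depending only on p. -/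
open Real
open scoped RealInnerProductSpace

private lemma aux_convex_sq (x y t : ℝ) (hx : 0 ≤ x) (hy : 0 ≤ y) (ht0 : 0 ≤ t) (ht1 : t ≤ 1) :
    ((1 - t) * y + t * x) ^ 2 ≤ x ^ 2 + y ^ 2 := by
  nlinarith [sq_nonneg (x - y), mul_nonneg (mul_nonneg ht0 (sub_nonneg.mpr ht1)) (sq_nonneg (x - y)),
    mul_nonneg hx hy, sq_nonneg (x + y), mul_nonneg ht0 (sub_nonneg.mpr ht1)]

set_option maxHeartbeats 1000000 in
theorem stmt_15 {N : ℕ} (p : ℝ) (hp1 : 1 < p) (hp2 : p < 2) :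
    ∃ C : ℝ, 0 < C ∧ ∀ (ε : ℝ), 0 < ε → ε < 1 →
      ∀ a b : EuclideanSpace ℝ (Fin N),
        ⟪((ε ^ 2 + ‖a‖ ^ 2) ^ ((p - 2) / 2)) • a -
          ((ε ^ 2 + ‖b‖ ^ 2) ^ ((p - 2) / 2)) • b, a - b⟫ ≥
        C * (1 + ‖a‖ ^ 2 + ‖b‖ ^ 2) ^ ((p - 2) / 2) * ‖a - b‖ ^ 2 := by
  refine ⟨p - 1, by linarith, ?_⟩
  intro ε hε hε1 a b
  set v : EuclideanSpace ℝ (Fin N) := a - b with hv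
  set V : ℝ := ‖v‖ ^ 2 with hV
  set B : ℝ := ‖b‖ ^ 2 with hB
  set D : ℝ := ⟪b, v⟫ with hD
  set u : ℝ → ℝ := fun t => ε ^ 2 + B + 2 * D * t + V * t ^ 2 with hu
  set q : ℝ := (p - 2) / 2 with hq
  set ψ : ℝ → ℝ := fun t => (u t) ^ q * (D + V * t) with hψ
  -- u t = ε² + ‖b + t•v‖²
  have hnorm : ∀ t : ℝ, ‖b + t • v‖ ^ 2 = B + 2 * D * t + V * t ^ 2 := by
    intro t
    have := @norm_add_sq_real (EuclideanSpace ℝ (Fin N)) _ _ b (t • v)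
    rw [real_inner_smul_right, norm_smul] at this
    simp only [Real.norm_eq_abs] at this
    rw [this, mul_pow, sq_abs]
    ring
  have hu_eq : ∀ t : ℝ, u t = ε ^ 2 + ‖b + t • v‖ ^ 2 := by
    intro t; rw [hnorm]; simp [hu]; ring
  have hu_pos : ∀ t : ℝ, 0 < u t := by
    intro t; rw [hu_eq]; positivity
  -- inner product identity: D + V * t = ⟪b + t•v, v⟫
  have hinner : ∀ t : ℝ, D + V * t = ⟪b + t • v, v⟫ := by
    intro t
    rw [inner_add_left, real_inner_smul_left, real_inner_self_eq_norm_sq]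
    ring
  -- derivative of ψ
  have hderiv : ∀ t : ℝ,
      HasDerivAt ψ ((p - 2) * (u t) ^ ((p - 4) / 2) * (D + V * t) ^ 2 + (u t) ^ q * V) t := by
    intro t
    have h1 : HasDerivAt u (2 * D + 2 * V * t) t := by
      have ha : HasDerivAt (fun t : ℝ => 2 * D * t) (2 * D) t := by
        simpa using (hasDerivAt_id t).const_mul (2 * D)
      have hb : HasDerivAt (fun t : ℝ => V * t ^ 2) (V * (2 * t)) t := by
        simpa using (hasDerivAt_pow 2 t).const_mul V
      have := ((hasDerivAt_const t (ε ^ 2 + B)).add ha).add hb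
      exact this.congr_deriv (by ring)
    have h2 : HasDerivAt (fun t => (u t) ^ q) (q * (u t) ^ (q - 1) * (2 * D + 2 * V * t)) t := by
      have := (Real.hasDerivAt_rpow_const (x := u t) (p := q)
        (Or.inl (ne_of_gt (hu_pos t)))).comp t h1
      exact this.congr_deriv (by ring)
    have h3 : HasDerivAt (fun t : ℝ => D + V * t) V t := by
      simpa using ((hasDerivAt_id t).const_mul V).const_add D
    have := h2.mul h3
    have hq1 : q - 1 = (p - 4) / 2 := by rw [hq]; ring
    refine this.congr_deriv ?_
    rw [hq1]
    ring
  -- lower bound for the derivative on [0,1]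
  set M : ℝ := (1 + ‖a‖ ^ 2 + ‖b‖ ^ 2) ^ q with hM
  have hderiv_ge : ∀ t ∈ Set.Icc (0:ℝ) 1,
      (p - 2) * (u t) ^ ((p - 4) / 2) * (D + V * t) ^ 2 + (u t) ^ q * V ≥ (p - 1) * M * V := by
    intro t ht
    have hupos := hu_pos t
    -- Cauchy-Schwarz: (D + V*t)² ≤ u t * V
    have hCS : (D + V * t) ^ 2 ≤ u t * V := by
      rw [hinner]
      have h1 : |⟪b + t • v, v⟫| ≤ ‖b + t • v‖ * ‖v‖ := abs_real_inner_le_norm _ _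
      have h2 : ⟪b + t • v, v⟫ ^ 2 ≤ (‖b + t • v‖ * ‖v‖) ^ 2 := by
        rw [← sq_abs]
        exact pow_le_pow_left₀ (abs_nonneg _) h1 2
      calc ⟪b + t • v, v⟫ ^ 2 ≤ (‖b + t • v‖ * ‖v‖) ^ 2 := h2
        _ = ‖b + t • v‖ ^ 2 * V := by rw [hV]; ring
        _ ≤ u t * V := by
            apply mul_le_mul_of_nonneg_right _ (by positivity)
            rw [hu_eq]; nlinarith [sq_nonneg ε]
    -- first term bound
    have hfirst : (p - 2) * (u t) ^ ((p - 4) / 2) * (D + V * t) ^ 2 ≥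
        (p - 2) * (u t) ^ q * V := by
      have hpow : (u t) ^ ((p - 4) / 2) * (u t * V) = (u t) ^ q * V := by
        have : (u t) ^ ((p - 4) / 2) * u t = (u t) ^ q := by
          rw [← Real.rpow_add_one (ne_of_gt hupos)]
          congr 1; rw [hq]; ring
        rw [← mul_assoc, this]
      have h1 : (u t) ^ ((p - 4) / 2) * (D + V * t) ^ 2 ≤ (u t) ^ ((p - 4) / 2) * (u t * V) :=
        mul_le_mul_of_nonneg_left hCS (Real.rpow_nonneg hupos.le _)
      rw [hpow] at h1
      have hp2 : p - 2 ≤ 0 := by linarith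
      calc (p - 2) * (u t) ^ ((p - 4) / 2) * (D + V * t) ^ 2
          = (p - 2) * ((u t) ^ ((p - 4) / 2) * (D + V * t) ^ 2) := by ring
        _ ≥ (p - 2) * ((u t) ^ q * V) := mul_le_mul_of_nonpos_left h1 hp2
        _ = (p - 2) * (u t) ^ q * V := by ring
    -- second: (u t)^q ≥ M
    have hut_le : u t ≤ 1 + ‖a‖ ^ 2 + ‖b‖ ^ 2 := by
      rw [hu_eq]
      have h1 : ‖b + t • v‖ ≤ (1 - t) * ‖b‖ + t * ‖a‖ := by
        have : b + t • v = (1 - t) • b + t • a := by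
          rw [hv]; module
        rw [this]
        calc ‖(1 - t) • b + t • a‖ ≤ ‖(1 - t) • b‖ + ‖t • a‖ := norm_add_le _ _
          _ = (1 - t) * ‖b‖ + t * ‖a‖ := by
              rw [norm_smul, norm_smul, Real.norm_eq_abs, Real.norm_eq_abs,
                abs_of_nonneg (by linarith [ht.2]), abs_of_nonneg ht.1]
      have h2 : ‖b + t • v‖ ^ 2 ≤ ((1 - t) * ‖b‖ + t * ‖a‖) ^ 2 :=
        pow_le_pow_left₀ (norm_nonneg _) h1 2
      have h3 : ((1 - t) * ‖b‖ + t * ‖a‖) ^ 2 ≤ ‖a‖ ^ 2 + ‖b‖ ^ 2 :=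
        aux_convex_sq ‖a‖ ‖b‖ t (norm_nonneg a) (norm_nonneg b) ht.1 ht.2
      have hε2 : ε ^ 2 ≤ 1 := by nlinarith
      linarith
    have hMle : M ≤ (u t) ^ q := by
      rw [hM]
      exact Real.rpow_le_rpow_of_nonpos hupos hut_le (by rw [hq]; linarith)
    have hVnn : 0 ≤ V := by positivity
    have hsecond : (u t) ^ q * V ≥ M * V := mul_le_mul_of_nonneg_right hMle hVnn
    have : (p - 2) * M * V ≥ (p - 2) * (u t) ^ q * V := by
      have := mul_le_mul_of_nonneg_right hMle hVnn
      nlinarith [mul_le_mul_of_nonneg_right hMle hVnn]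
    nlinarith [hfirst, hsecond, this]
  -- mean value theorem
  have hcont : ContinuousOn ψ (Set.Icc (0:ℝ) 1) :=
    fun t _ => ((hderiv t).continuousAt).continuousWithinAt
  obtain ⟨c, hc, hceq⟩ := exists_hasDerivAt_eq_slope ψ
    (fun t => (p - 2) * (u t) ^ ((p - 4) / 2) * (D + V * t) ^ 2 + (u t) ^ q * V)
    (by norm_num) hcont (fun x _ => hderiv x)
  have hslope : ψ 1 - ψ 0 ≥ (p - 1) * M * V := by
    have h1 : ψ 1 - ψ 0 = (p - 2) * (u c) ^ ((p - 4) / 2) * (D + V * c) ^ 2 + (u c) ^ q * V := by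
      rw [hceq]; norm_num
    rw [h1]
    exact hderiv_ge c ⟨hc.1.le, hc.2.le⟩
  -- rewrite LHS as ψ 1 - ψ 0
  have hLHS : ⟪((ε ^ 2 + ‖a‖ ^ 2) ^ q) • a - ((ε ^ 2 + ‖b‖ ^ 2) ^ q) • b, a - b⟫ = ψ 1 - ψ 0 := by
    have hu1 : u 1 = ε ^ 2 + ‖a‖ ^ 2 := by
      rw [hu_eq]
      congr 2
      rw [hv]; simp
    have hu0 : u 0 = ε ^ 2 + ‖b‖ ^ 2 := by
      simp [hu, hB]
    have hinner1 : D + V * 1 = ⟪a, v⟫ := by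
      rw [hinner]
      congr 1
      rw [hv]; simp
    have hinner0 : D + V * 0 = ⟪b, v⟫ := by rw [hD]; ring
    rw [inner_sub_left, real_inner_smul_left, real_inner_smul_left, hψ]
    simp only []
    rw [hu1, hu0, hinner1, hinner0, ← hv]
  rw [hq] at hLHS
  rw [hLHS, hM, hq] at *
  calc ψ 1 - ψ 0 ≥ (p - 1) * M * V := hslope
    _ = (p - 1) * (1 + ‖a‖ ^ 2 + ‖b‖ ^ 2) ^ ((p - 2) / 2) * ‖a - b‖ ^ 2 := by
        rw [hM, hV, hv, hq]
end
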